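/- Let x_a, x_b > 0 with x_a + x_b + x_□ = 1. Then the rational function x_a x_b x_□ (1 - x_b^2) / (1 - 2x_a^2 - 2x_b^2 + (x_a^2 - x_b^2)^2) tends to (1 - x_b^2)/8 as x_□ → 0 (equivalently, as x_a + x_b → 1): substituting x_b = 1 - x_a - x_□ and letting x_□ → 0 gives the limit (1-x_b^2)/8 where now x_b = 1 - x_a. -/
import Mathlib


/-- Let `x_a, x_b > 0` with `x_a + x_b + x_□ = 1` (so `x_b = 1 - x_a - x_□`).
Then `x_a x_b x_□ (1 - x_b²) / (1 - 2x_a² - 2x_b² + (x_a² - x_b²)²)` tends to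
`(1 - x_b²)/8` as `x_□ → 0⁺`, where in the limit `x_b = 1 - x_a`. -/
theorem psi_limit_klein_four (xa : ℝ) (hxa : 0 < xa) (hxa1 : xa < 1) :
    Filter.Tendsto
      (fun t : ℝ =>
        xa * (1 - xa - t) * t * (1 - (1 - xa - t) ^ 2) /
          (1 - 2 * xa ^ 2 - 2 * (1 - xa - t) ^ 2 + (xa ^ 2 - (1 - xa - t) ^ 2) ^ 2))
      (nhdsWithin 0 (Set.Ioi 0)) (nhds ((1 - (1 - xa) ^ 2) / 8)) := by
  set g : ℝ → ℝ := fun t =>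
    xa * (1 - xa - t) * (1 - (1 - xa - t) ^ 2) / ((2 - t) * (1 - (2 * xa - 1 + t) ^ 2)) with hg_def
  have hden0 : ((2 : ℝ) - 0) * (1 - (2 * xa - 1 + 0) ^ 2) ≠ 0 := by nlinarith
  have hg : Filter.Tendsto g (nhdsWithin 0 (Set.Ioi 0)) (nhds ((1 - (1 - xa) ^ 2) / 8)) := by
    have hc : ContinuousAt g 0 := by
      apply ContinuousAt.div
      · fun_prop
      · fun_prop
      · exact hden0
    have h0 : g 0 = (1 - (1 - xa) ^ 2) / 8 := by
      simp only [hg_def]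
      rw [div_eq_div_iff hden0 (by norm_num)]
      ring
    have := hc.tendsto
    rw [h0] at this
    exact this.mono_left nhdsWithin_le_nhds
  refine hg.congr' ?_
  filter_upwards [self_mem_nhdsWithin] with t ht
  have ht0 : (t : ℝ) ≠ 0 := ne_of_gt ht
  have hden : 1 - 2 * xa ^ 2 - 2 * (1 - xa - t) ^ 2 + (xa ^ 2 - (1 - xa - t) ^ 2) ^ 2
      = t * ((2 - t) * (1 - (2 * xa - 1 + t) ^ 2)) := by ring
  simp only [hg_def]
  rw [hden]
  rcases eq_or_ne ((2 - t) * (1 - (2 * xa - 1 + t) ^ 2)) 0 with hM | hM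
  · rw [hM, mul_zero, div_zero, div_zero]
  · rw [show xa * (1 - xa - t) * t * (1 - (1 - xa - t) ^ 2)
        = t * (xa * (1 - xa - t) * (1 - (1 - xa - t) ^ 2)) by ring,
      mul_div_mul_left _ _ ht0]
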